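/- Let l and r be unit quaternions with equal real parts and with l ≠ 1 and l ≠ -1. Then the set {q ∈ ℍ : l * q = q * r} is an ℝ-linear subspace of ℍ of dimension exactly 2. -/

import Mathlib

/-!
The centralizer of a non-real quaternion `r` is `span {1, r}`, because a quaternion commuting
with `r` has imaginary part parallel to `r.im`. Write `a = l.im` and `b = r.im`. Equal real parts
and equal norms give `a² = b² = -normSq a`, a central element, so `u = a x + x b` satisfies
`l u = u r` for every `x`. Not all of these vanish: `x = 1` would force `b = -a`, and then the
centralizer of `a` would be all of `ℍ`, which is 4-dimensional. Left multiplication by such a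
`u ≠ 0` identifies `{q | l q = q r}` with the centralizer of `r`.
-/

open Quaternion

section TwistedCommutant

variable (R : Type*) {A : Type*} [CommSemiring R] [Ring A] [Algebra R A]

def twistedCommutant (l r : A) : Submodule R A :=
  LinearMap.ker (LinearMap.mulLeft R l - LinearMap.mulRight R r)

variable {R}

@[simp]
lemma mem_twistedCommutant {l r q : A} : q ∈ twistedCommutant R l r ↔ l * q = q * r := by
  simp [twistedCommutant, sub_eq_zero]

lemma twistedCommutant_eq_map_mulLeft {l r : A} (u : Aˣ) (h : l * u = u * r) :
    twistedCommutant R l r =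
      (twistedCommutant R r r).map (u.mulLeftLinearEquiv R A : A →ₗ[R] A) := by
  ext q
  have hru : r * (u⁻¹ * q) = u⁻¹ * (l * q) := by
    have : r * u⁻¹ = u⁻¹ * l := by
      rw [Units.eq_inv_mul_iff_mul_eq, ← mul_assoc, ← h, Units.mul_inv_cancel_right]
    rw [← mul_assoc, this, mul_assoc]
  rw [Submodule.mem_map_equiv, mem_twistedCommutant, mem_twistedCommutant,
    Units.symm_mulLeftLinearEquiv_apply, hru, mul_assoc, Units.mul_right_inj]

lemma finrank_twistedCommutant_eq {l r : A} (u : Aˣ) (h : l * u = u * r) :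
    Module.finrank R (twistedCommutant R l r) = Module.finrank R (twistedCommutant R r r) := by
  rw [twistedCommutant_eq_map_mulLeft u h, LinearEquiv.finrank_map_eq]

end TwistedCommutant

namespace Quaternion

variable {R : Type*}

lemma normSq_eq_re_sq_add_normSq_im [CommRing R] (a : ℍ[R]) :
    normSq a = a.re ^ 2 + normSq a.im := by
  simp only [normSq_def', re_im, imI_im, imJ_im, imK_im]; ring

lemma normSq_im_eq_of_re_eq [CommRing R] {a b : ℍ[R]} (hre : a.re = b.re)
    (hN : normSq a = normSq b) : normSq a.im = normSq b.im := by
  rw [normSq_eq_re_sq_add_normSq_im a, normSq_eq_re_sq_add_normSq_im b, hre] at hN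
  exact add_left_cancel hN

variable [Field R] [LinearOrder R] [IsStrictOrderedRing R]

lemma mul_eq_coe_re_of_commute {a b : ℍ[R]} (ha : a.re = 0) (hb : b.re = 0) (h : Commute a b) :
    a * b = ↑(a * b).re := by
  have hI := congrArg QuaternionAlgebra.imI h.eq
  have hJ := congrArg QuaternionAlgebra.imJ h.eq
  have hK := congrArg QuaternionAlgebra.imK h.eq
  simp only [imI_mul, imJ_mul, imK_mul, ha, hb] at hI hJ hK
  ext <;> simp only [re_coe, imI_coe, imJ_coe, imK_coe, imI_mul, imJ_mul, imK_mul, ha, hb] <;>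
    ring_nf at hI hJ hK ⊢ <;> linarith

lemma im_eq_smul_im_of_commute {r p : ℍ[R]} (hr : r.im ≠ 0) (h : Commute r p) :
    ∃ c : R, p.im = c • r.im := by
  have him : Commute r.im p.im := by
    rw [← sub_re_self r, ← sub_re_self p]
    exact (h.sub_right (coe_commute p.re r).symm).sub_left (coe_commute r.re _)
  have hreal := mul_eq_coe_re_of_commute (re_im r) (re_im p) him
  have : r.im * r.im * p.im = (r.im * p.im).re • r.im := by
    rw [mul_assoc, hreal, mul_coe_eq_smul, re_coe]
  rw [← pow_two, im_sq, neg_mul, coe_mul_eq_smul, neg_eq_iff_eq_neg, ← neg_smul] at this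
  exact ⟨_, by rw [mul_smul, ← this, inv_smul_smul₀ (normSq_ne_zero.2 hr)]⟩

lemma twistedCommutant_self_eq_span {r : ℍ[R]} (hr : r.im ≠ 0) :
    twistedCommutant R r r = Submodule.span R {1, r} := by
  refine le_antisymm (fun p hp ↦ ?_) (Submodule.span_le.2 ?_)
  · obtain ⟨c, hc⟩ := im_eq_smul_im_of_commute hr (mem_twistedCommutant.1 hp)
    rw [Submodule.mem_span_pair]
    refine ⟨p.re - c * r.re, c, ?_⟩
    calc (p.re - c * r.re) • 1 + c • r = ↑p.re + c • (r - ↑r.re) := by ext <;> simp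
      _ = p := by rw [sub_re_self, ← hc, re_add_im]
  · simp [Set.insert_subset_iff]

lemma finrank_twistedCommutant_self {r : ℍ[R]} (hr : r.im ≠ 0) :
    Module.finrank R (twistedCommutant R r r) = 2 := by
  have hli : LinearIndependent R ![1, r] := by
    refine LinearIndependent.pair_iff.2 fun s t hst ↦ ?_
    have ht : t = 0 := by simpa [hr] using congrArg im hst
    subst ht
    simpa using hst
  rw [twistedCommutant_self_eq_span hr, ← Matrix.range_cons_cons_empty 1 r ![],
    finrank_span_eq_card hli, Fintype.card_fin]

lemma im_mul_add_mul_im_mem_twistedCommutant {l r : ℍ[R]} (hre : l.re = r.re)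
    (hN : normSq l.im = normSq r.im) (x : ℍ[R]) :
    l.im * x + x * r.im ∈ twistedCommutant R l r := by
  rw [mem_twistedCommutant]
  have hsq : l.im * l.im * x = x * (r.im * r.im) := by
    rw [← pow_two, ← pow_two, im_sq, im_sq, hN, neg_mul, mul_neg, coe_commutes]
  calc l * (l.im * x + x * r.im)
      = (↑r.re + l.im) * (l.im * x + x * r.im) := by rw [← hre, re_add_im]
    _ = ↑r.re * (l.im * x + x * r.im) + l.im * l.im * x + l.im * x * r.im := by noncomm_ring
    _ = (l.im * x + x * r.im) * ↑r.re + x * (r.im * r.im) + l.im * x * r.im := by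
      rw [coe_commutes, hsq]
    _ = (l.im * x + x * r.im) * (↑r.re + r.im) := by noncomm_ring
    _ = (l.im * x + x * r.im) * r := by rw [re_add_im]

lemma exists_ne_zero_mul_eq_mul {l r : ℍ[R]} (hre : l.re = r.re)
    (hN : normSq l.im = normSq r.im) (hl : l.im ≠ 0) : ∃ u ≠ 0, l * u = u * r := by
  obtain ⟨x, hx⟩ : ∃ x, l.im * x + x * r.im ≠ 0 := by
    by_contra! h
    have hb : r.im = -l.im := eq_neg_of_add_eq_zero_right (by simpa using h 1)
    have htop : twistedCommutant R l.im l.im = ⊤ := by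
      refine eq_top_iff.2 fun x _ ↦ mem_twistedCommutant.2 ?_
      simpa [hb, add_neg_eq_zero] using h x
    have hdim := finrank_twistedCommutant_self (r := l.im) (by rwa [im_idem])
    rw [htop, finrank_top, finrank_eq_four] at hdim
    omega
  exact ⟨_, hx, mem_twistedCommutant.1 (im_mul_add_mul_im_mem_twistedCommutant hre hN x)⟩

lemma eq_one_or_eq_neg_one_of_im_eq_zero {q : ℍ} (hq : ‖q‖ = 1) (him : q.im = 0) :
    q = 1 ∨ q = -1 := by
  rw [← re_add_im q, him, add_zero] at hq ⊢
  rw [norm_coe, Real.norm_eq_abs] at hq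
  rcases (abs_eq zero_le_one).1 hq with h | h <;> simp [h]

end Quaternion

/-- If `l` and `r` are unit quaternions with equal real parts, `l ≠ 1` and `l ≠ -1`,
then `{q : ℍ | l * q = q * r}` is a 2-dimensional `ℝ`-linear subspace of `ℍ ≅ ℝ⁴`. -/
theorem stmt_4 (l r : ℍ[ℝ]) (hl : ‖l‖ = 1) (hr : ‖r‖ = 1)
    (hre : l.re = r.re) (h1 : l ≠ 1) (h2 : l ≠ -1) :
    ∃ N : Submodule ℝ ℍ[ℝ], (N : Set ℍ[ℝ]) = {q : ℍ[ℝ] | l * q = q * r} ∧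
      Module.finrank ℝ N = 2 := by
  have hN : normSq l.im = normSq r.im :=
    normSq_im_eq_of_re_eq hre (by rw [normSq_eq_norm_mul_self, normSq_eq_norm_mul_self, hl, hr])
  have hl_im : l.im ≠ 0 := fun h ↦ (eq_one_or_eq_neg_one_of_im_eq_zero hl h).elim h1 h2
  have hr_im : r.im ≠ 0 := by rwa [← normSq_ne_zero, ← hN, normSq_ne_zero]
  obtain ⟨u, hu0, hu⟩ := exists_ne_zero_mul_eq_mul hre hN hl_im
  refine ⟨twistedCommutant ℝ l r, by ext; simp, ?_⟩
  rw [finrank_twistedCommutant_eq (Units.mk0 u hu0) hu, finrank_twistedCommutant_self hr_im]
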